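/- For every real ρ > 2/log 2, the integer N_ρ satisfies ℓ(M) − ρ·log M ≥ ℓ(N_ρ) − ρ·log N_ρ for every integer M ≥ 1 (equivalently, ben(M) = ℓ(M) − ℓ(N_ρ) − ρ·log(M/N_ρ) ≥ 0 for all M ≥ 1); in particular, N_ρ is a value of Landau's function g. -/

import Mathlib

/-!
`ellSubLog ρ n = ℓ(n) - ρ log n` is additive over the prime-power parts of `n`, so `N_ρ`
minimizes it once each `k ↦ ℓ(p^k) - ρ k log p` is minimized at `α_p`. The increments of that
function are `(ellCost p (k+1) - ρ) log p` and `ellCost p k` is nondecreasing in `k ≥ 1`, so the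
minimum sits at the last `k` with `ellCost p k ≤ ρ`. That is `α_p`: for `p ≤ x` the value `k = 1`
qualifies because `t / log t` increases on `[e, ∞)` (and by `ρ > 2 / log 2` at `p = 2`), while for
`p > x` already `ellCost p 1 = p / log p ≥ ρ`.

An element of `S_n` of order `M` has `ℓ(M) ≤ n`, since `M` is the lcm of its cycle lengths and
`ℓ` of an lcm is at most the sum; cycles of lengths `p^{α_p}` realise `N_ρ` in `S_{ℓ(N_ρ)}`.
If `ℓ(M) ≤ ℓ(N_ρ)`, superiority gives `ρ log M ≤ ρ log N_ρ`, hence `N_ρ = g(ℓ(N_ρ))`.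
-/
/-- Landau's function: the maximal order of an element of the symmetric group `S_n`. -/
noncomputable def landau (n : ℕ) : ℕ :=
  Finset.univ.sup fun σ : Equiv.Perm (Fin n) => orderOf σ

/-- The additive function `ℓ` with `ℓ(1) = 0` and `ℓ(p^k) = p^k` for primes `p` and `k ≥ 1`. -/
def ell (M : ℕ) : ℕ := ∑ p ∈ M.primeFactors, p ^ M.factorization p

/-- `(ℓ(p^k) - ℓ(p^{k-1})) / log p`, the cost of raising the exponent of `p` from `k-1` to `k`. -/
noncomputable def ellCost (p k : ℕ) : ℝ :=
  ((ell (p ^ k) : ℝ) - (ell (p ^ (k - 1)) : ℝ)) / Real.log p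

/-- The exponent `α_p` of the prime `p` in `N_ρ`, where `ρ = x / log x`:
`α_p = 0` for `p > x`, and otherwise `α_p` is the (largest) `k ≥ 1` with
`(p^k - p^{k-1})/log p ≤ ρ < (p^{k+1} - p^k)/log p` (here `p^1 - p^0` is to be read as `p`,
i.e. as `ℓ(p^1) - ℓ(p^0)`). -/
noncomputable def alphaExp (x : ℝ) (p : ℕ) : ℕ :=
  if (p : ℝ) ≤ x then sSup {k : ℕ | 1 ≤ k ∧ ellCost p k ≤ x / Real.log x} else 0

/-- Ramanujan's superior champion `N_ρ = ∏_{p ≤ x} p^{α_p}`, with `ρ = x / log x`. -/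
noncomputable def Nrho (x : ℝ) : ℕ :=
  ∏ p ∈ (Finset.range (⌊x⌋₊ + 1)).filter Nat.Prime, p ^ alphaExp x p

@[simp] lemma ell_one : ell 1 = 0 := by simp [ell]

lemma ell_prime_pow {p k : ℕ} (hp : p.Prime) (hk : k ≠ 0) : ell (p ^ k) = p ^ k := by
  simp [ell, Nat.primeFactors_pow p hk, hp.primeFactors, hp.factorization_pow]

lemma ell_mul_of_coprime {a b : ℕ} (hab : a.Coprime b) : ell (a * b) = ell a + ell b := by
  change ((a * b).factorization.sum fun p k => p ^ k) = a.factorization.sum (fun p k => p ^ k) +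
    b.factorization.sum fun p k => p ^ k
  rw [Nat.factorization_mul_of_coprime hab]
  exact Finsupp.sum_add_index_of_disjoint hab.disjoint_primeFactors _

lemma ell_le_self (M : ℕ) : ell M ≤ M := by
  induction M using Nat.recOnPosPrimePosCoprime with
  | prime_pow p k hp hk => exact (ell_prime_pow hp hk.ne').le
  | zero => simp [ell]
  | one => simp
  | coprime a b ha hb hab iha ihb =>
    rw [ell_mul_of_coprime hab]
    nlinarith

lemma ell_eq_sum_ell_pow {M : ℕ} {S : Finset ℕ} (hS : M.primeFactors ⊆ S) :
    ell M = ∑ p ∈ S, ell (p ^ M.factorization p) := by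
  rw [← Finset.sum_subset hS fun p _ hp => by
    rw [Finsupp.notMem_support_iff.mp hp, pow_zero, ell_one]]
  exact Finset.sum_congr rfl fun p hp =>
    (ell_prime_pow (Nat.prime_of_mem_primeFactors hp) (Finsupp.mem_support_iff.mp hp)).symm

lemma ell_lcm_le (a b : ℕ) : ell (a.lcm b) ≤ ell a + ell b := by
  rcases eq_or_ne a 0 with rfl | ha
  · simp [ell]
  rcases eq_or_ne b 0 with rfl | hb
  · simp [ell]
  have hS : (a.lcm b).primeFactors ⊆ a.primeFactors ∪ b.primeFactors :=
    (Nat.primeFactors_mono (Nat.lcm_dvd_mul a b) (mul_ne_zero ha hb)).trans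
      (Nat.primeFactors_mul ha hb).le
  rw [ell_eq_sum_ell_pow hS, ell_eq_sum_ell_pow Finset.subset_union_left,
    ell_eq_sum_ell_pow Finset.subset_union_right, ← Finset.sum_add_distrib]
  refine Finset.sum_le_sum fun p _ => ?_
  rw [Nat.factorization_lcm ha hb, Finsupp.sup_apply]
  rcases max_choice (a.factorization p) (b.factorization p) with h | h <;> rw [h] <;> omega

lemma ell_multiset_lcm_le (m : Multiset ℕ) : ell m.lcm ≤ m.sum := by
  induction m using Multiset.induction with
  | empty => simp
  | cons a m ih =>
    rw [Multiset.lcm_cons, Multiset.sum_cons, lcm_eq_nat_lcm]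
    linarith [ell_lcm_le a m.lcm, ell_le_self a]

lemma ell_orderOf_le_card {α : Type*} [Fintype α] [DecidableEq α] (σ : Equiv.Perm α) :
    ell (orderOf σ) ≤ Fintype.card α := by
  rw [← σ.lcm_cycleType]
  exact (ell_multiset_lcm_le _).trans σ.sum_cycleType_le

/-- A permutation whose cycles have the prime-power components of `N` as lengths has order `N`. -/
lemma exists_perm_orderOf_eq {N : ℕ} (hN : N ≠ 0) :
    ∃ σ : Equiv.Perm (Fin (ell N)), orderOf σ = N := by
  set m : Multiset ℕ := N.primeFactors.val.map fun p => p ^ N.factorization p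
  obtain ⟨σ, hσ⟩ : ∃ σ : Equiv.Perm (Fin (ell N)), σ.cycleType = m := by
    refine (Equiv.Perm.exists_with_cycleType_iff _).mpr ⟨(Fintype.card_fin _).ge, ?_⟩
    simp only [m, Multiset.mem_map]
    rintro _ ⟨p, hp, rfl⟩
    have hp' : p ∈ N.primeFactors := hp
    exact (Nat.prime_of_mem_primeFactors hp').two_le.trans
      (Nat.le_self_pow (Finsupp.mem_support_iff.mp hp') p)
  refine ⟨σ, ?_⟩
  rw [← σ.lcm_cycleType, hσ, ← Finset.lcm_def, Finset.lcm_eq_prod]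
  · exact Nat.prod_factorization_pow_eq_self hN
  · intro p hp q hq hpq
    exact Nat.Coprime.pow _ _ ((Nat.coprime_primes (Nat.prime_of_mem_primeFactors hp)
      (Nat.prime_of_mem_primeFactors hq)).mpr hpq)

lemma landau_ell_eq {N : ℕ} (hN : N ≠ 0) (hmax : ∀ M, ell M ≤ ell N → M ≤ N) :
    landau (ell N) = N := by
  obtain ⟨σ, hσ⟩ := exists_perm_orderOf_eq hN
  refine le_antisymm (Finset.sup_le fun τ _ => hmax _ ?_) ?_
  · simpa using ell_orderOf_le_card τ
  · conv_lhs => rw [← hσ]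
    exact Finset.le_sup (f := fun τ : Equiv.Perm (Fin (ell N)) => orderOf τ) (Finset.mem_univ σ)

noncomputable def ellSubLog (ρ : ℝ) (n : ℕ) : ℝ := ell n - ρ * Real.log n

lemma ellSubLog_eq_sum (ρ : ℝ) {M : ℕ} (hM : M ≠ 0) {S : Finset ℕ}
    (hS : M.primeFactors ⊆ S) :
    ellSubLog ρ M = ∑ p ∈ S, ellSubLog ρ (p ^ M.factorization p) := by
  have hprod : ∏ p ∈ S, p ^ M.factorization p = M := by
    rw [← Finsupp.prod_of_support_subset _ hS _ fun _ _ => pow_zero _]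
    exact Nat.prod_factorization_pow_eq_self hM
  have hlog : Real.log M = ∑ p ∈ S, Real.log ((p ^ M.factorization p : ℕ) : ℝ) := by
    conv_lhs => rw [← hprod]
    rw [Nat.cast_prod, Real.log_prod]
    intro p hp
    exact_mod_cast Finset.prod_ne_zero_iff.mp (hprod ▸ hM) p hp
  simp only [ellSubLog, ell_eq_sum_ell_pow hS, hlog, Nat.cast_sum, Finset.mul_sum,
    ← Finset.sum_sub_distrib]

lemma log_prime_pos {p : ℕ} (hp : p.Prime) : 0 < Real.log p :=
  Real.log_pos (by exact_mod_cast hp.one_lt)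

lemma ellCost_mul_log {p : ℕ} (hp : p.Prime) (k : ℕ) :
    ellCost p k * Real.log p = ell (p ^ k) - ell (p ^ (k - 1)) :=
  div_mul_cancel₀ _ (log_prime_pos hp).ne'

lemma ellSubLog_pow_succ (ρ : ℝ) {p : ℕ} (hp : p.Prime) (k : ℕ) :
    ellSubLog ρ (p ^ (k + 1)) = ellSubLog ρ (p ^ k) + (ellCost p (k + 1) - ρ) * Real.log p := by
  rw [sub_mul, ellCost_mul_log hp, Nat.add_sub_cancel]
  simp only [ellSubLog, Nat.cast_pow, Real.log_pow]
  push_cast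
  ring

lemma ellCost_one {p : ℕ} (hp : p.Prime) : ellCost p 1 = p / Real.log p := by
  have hell : ell p = p := by simpa using ell_prime_pow hp one_ne_zero
  simp [ellCost, hell]

lemma ellCost_le_ellCost_succ {p k : ℕ} (hp : p.Prime) (hk : k ≠ 0) :
    ellCost p k ≤ ellCost p (k + 1) := by
  refine div_le_div_of_nonneg_right ?_ (log_prime_pos hp).le
  have h1 : ell (p ^ k) = p ^ k := ell_prime_pow hp hk
  have h2 : ell (p ^ (k + 1)) = p ^ k * p := ell_prime_pow hp k.succ_ne_zero
  have h3 : (2 : ℝ) ≤ p := by exact_mod_cast hp.two_le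
  rw [Nat.add_sub_cancel, h1, h2]
  push_cast
  nlinarith [(ell (p ^ (k - 1))).cast_nonneg (α := ℝ), pow_pos (by linarith : (0 : ℝ) < p) k]

lemma ellCost_monotoneOn {p : ℕ} (hp : p.Prime) : MonotoneOn (ellCost p) {k | 1 ≤ k} :=
  monotoneOn_nat_Ici_of_le_succ fun _ hk => ellCost_le_ellCost_succ hp (by omega)

lemma natCast_le_ellCost_mul_log {p k : ℕ} (hp : p.Prime) (hk : k ≠ 0) :
    (k : ℝ) ≤ ellCost p k * Real.log p := by
  obtain ⟨j, rfl⟩ := Nat.exists_eq_succ_of_ne_zero hk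
  have hj : j + 1 ≤ p ^ j := Nat.lt_pow_self hp.one_lt
  have hell : ell (p ^ (j + 1)) = p ^ j * p := ell_prime_pow hp j.succ_ne_zero
  have h2 : (2 : ℝ) ≤ p := by exact_mod_cast hp.two_le
  rw [ellCost_mul_log hp, Nat.succ_sub_one, hell]
  have hj' : ((j + 1 : ℕ) : ℝ) ≤ p ^ j := by exact_mod_cast hj
  have hle : (ell (p ^ j) : ℝ) ≤ p ^ j := by exact_mod_cast ell_le_self _
  push_cast at hj' ⊢
  nlinarith

lemma div_log_le_div_log {a b : ℝ} (ha : Real.exp 1 ≤ a) (hab : a ≤ b) :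
    a / Real.log a ≤ b / Real.log b := by
  have hb_pos : 0 < Real.log b / b :=
    div_pos (Real.log_pos (by linarith [Real.add_one_le_exp 1])) (by linarith [Real.exp_pos 1])
  rw [← inv_div, ← inv_div (Real.log b)]
  exact inv_anti₀ hb_pos (Real.log_div_self_antitoneOn ha (ha.trans hab) hab)

/-- For `p ≥ 3` this is the monotonicity of `t / log t` on `[e, ∞)`; for `p = 2` it is `hρ`. -/
lemma prime_div_log_le {x : ℝ} (hρ : 2 / Real.log 2 < x / Real.log x) {p : ℕ} (hp : p.Prime)
    (hpx : (p : ℝ) ≤ x) : p / Real.log p ≤ x / Real.log x := by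
  rcases eq_or_ne p 2 with rfl | hp2
  · exact_mod_cast hρ.le
  · have h3 : (3 : ℝ) ≤ p := by exact_mod_cast (hp.two_le.lt_of_ne' hp2)
    exact div_log_le_div_log (by linarith [Real.exp_one_lt_d9]) hpx

lemma bddAbove_ellCost_le {p : ℕ} (hp : p.Prime) (ρ : ℝ) :
    BddAbove {k : ℕ | 1 ≤ k ∧ ellCost p k ≤ ρ} := by
  refine ⟨⌈ρ * Real.log p⌉₊, fun k ⟨hk, hkρ⟩ => ?_⟩
  have h := (natCast_le_ellCost_mul_log hp (by omega)).trans
    (mul_le_mul_of_nonneg_right hkρ (log_prime_pos hp).le)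
  exact_mod_cast h.trans (Nat.le_ceil _)

lemma ellCost_le_of_le_alphaExp {x : ℝ} (hρ : 2 / Real.log 2 < x / Real.log x) {p j : ℕ}
    (hp : p.Prime) (hj : 1 ≤ j) (hjα : j ≤ alphaExp x p) : ellCost p j ≤ x / Real.log x := by
  by_cases hpx : (p : ℝ) ≤ x
  · have hne : {k : ℕ | 1 ≤ k ∧ ellCost p k ≤ x / Real.log x}.Nonempty :=
      ⟨1, le_rfl, (ellCost_one hp).trans_le (prime_div_log_le hρ hp hpx)⟩
    have hα := Nat.sSup_mem hne (bddAbove_ellCost_le hp _)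
    rw [alphaExp, if_pos hpx] at hjα
    exact (ellCost_monotoneOn hp hj hα.1 hjα).trans hα.2
  · simp only [alphaExp, hpx, if_false, nonpos_iff_eq_zero] at hjα
    omega

lemma le_ellCost_of_alphaExp_lt {x : ℝ} (hx : Real.exp 1 ≤ x) {p j : ℕ} (hp : p.Prime)
    (hj : alphaExp x p < j) : x / Real.log x ≤ ellCost p j := by
  by_cases hpx : (p : ℝ) ≤ x
  · rw [alphaExp, if_pos hpx] at hj
    by_contra! hlt
    exact hj.not_ge (le_csSup (bddAbove_ellCost_le hp _) ⟨by omega, hlt.le⟩)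
  · simp only [alphaExp, hpx, if_false] at hj
    calc x / Real.log x ≤ p / Real.log p := div_log_le_div_log hx (not_le.mp hpx).le
      _ = ellCost p 1 := (ellCost_one hp).symm
      _ ≤ ellCost p j := ellCost_monotoneOn hp (le_refl 1) hj hj

lemma le_of_antitone_below_of_monotone_above {α : Type*} [Preorder α] {f : ℕ → α} {a : ℕ}
    (hdec : ∀ n < a, f (n + 1) ≤ f n) (hinc : ∀ n ≥ a, f n ≤ f (n + 1)) (k : ℕ) : f a ≤ f k := by
  rcases le_total a k with hak | hka
  · exact Nat.rel_of_forall_rel_succ_of_le_of_le (· ≤ ·) hinc le_rfl hak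
  · exact Nat.decreasingInduction (motive := fun n _ => f a ≤ f n)
      (fun n hn ih => ih.trans (hdec n hn)) le_rfl hka

lemma ellSubLog_pow_alphaExp_le {x : ℝ} (hx : Real.exp 1 ≤ x)
    (hρ : 2 / Real.log 2 < x / Real.log x) {p : ℕ} (hp : p.Prime) (k : ℕ) :
    ellSubLog (x / Real.log x) (p ^ alphaExp x p) ≤ ellSubLog (x / Real.log x) (p ^ k) := by
  refine le_of_antitone_below_of_monotone_above (f := fun k => ellSubLog _ (p ^ k))
    (fun n hn => ?_) (fun n hn => ?_) k <;> simp only [ellSubLog_pow_succ _ hp]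
  · have := ellCost_le_of_le_alphaExp hρ hp n.succ_pos hn
    nlinarith [log_prime_pos hp]
  · have := le_ellCost_of_alphaExp_lt hx hp (Nat.lt_succ_of_le hn)
    nlinarith [log_prime_pos hp]

lemma Nrho_ne_zero (x : ℝ) : Nrho x ≠ 0 :=
  Finset.prod_ne_zero_iff.mpr fun _ hp => pow_ne_zero _ (Finset.mem_filter.mp hp).2.ne_zero

lemma factorization_Nrho (x : ℝ) {q : ℕ} (hq : q.Prime) :
    (Nrho x).factorization q = alphaExp x q := by
  rw [Nrho, Nat.factorization_prod fun p hp => pow_ne_zero _ (Finset.mem_filter.mp hp).2.ne_zero,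
    Finset.sum_apply', Finset.sum_congr rfl fun p hp => by
      rw [(Finset.mem_filter.mp hp).2.factorization_pow, Finsupp.single_apply],
    Finset.sum_ite_eq']
  split_ifs with hmem
  · rfl
  · have hqx : ¬ (q : ℝ) ≤ x := fun h =>
      hmem (Finset.mem_filter.mpr ⟨Finset.mem_range_succ_iff.mpr (Nat.le_floor h), hq⟩)
    simp [alphaExp, hqx]

lemma ellSubLog_Nrho_le {x : ℝ} (hx : Real.exp 1 ≤ x) (hρ : 2 / Real.log 2 < x / Real.log x)
    {M : ℕ} (hM : M ≠ 0) :
    ellSubLog (x / Real.log x) (Nrho x) ≤ ellSubLog (x / Real.log x) M := by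
  have hS : ∀ p ∈ M.primeFactors ∪ (Nrho x).primeFactors, p.Prime := fun p hp => by
    rcases Finset.mem_union.mp hp with h | h <;> exact Nat.prime_of_mem_primeFactors h
  rw [ellSubLog_eq_sum _ (Nrho_ne_zero x) Finset.subset_union_right,
    ellSubLog_eq_sum _ hM Finset.subset_union_left]
  refine Finset.sum_le_sum fun p hp => ?_
  rw [factorization_Nrho x (hS p hp)]
  exact ellSubLog_pow_alphaExp_le hx hρ (hS p hp) _

lemma le_of_ell_le_of_ellSubLog_le {ρ : ℝ} (hρ : 0 < ρ) {M N : ℕ} (hM : M ≠ 0) (hN : N ≠ 0)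
    (hell : ell M ≤ ell N) (hsub : ellSubLog ρ N ≤ ellSubLog ρ M) : M ≤ N := by
  have hlog : Real.log M ≤ Real.log N := by
    have : (ell M : ℝ) ≤ ell N := by exact_mod_cast hell
    unfold ellSubLog at hsub
    nlinarith
  have hM' : (0 : ℝ) < M := by exact_mod_cast Nat.pos_of_ne_zero hM
  exact_mod_cast (Real.log_le_log_iff hM' (by exact_mod_cast Nat.pos_of_ne_zero hN)).mp hlog

/-- For `ρ > 2/log 2` and `x > 4` with `ρ = x/log x`, the integer `N_ρ`
satisfies `ℓ(M) - ρ log M ≥ ℓ(N_ρ) - ρ log N_ρ` for all `M ≥ 1`; in particular `N_ρ` is a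
value of Landau's function. -/
theorem Nrho_superior_and_mem_range_landau (ρ x : ℝ)
    (hρ : 2 / Real.log 2 < ρ) (hx : 4 < x) (hρx : ρ = x / Real.log x) :
    (∀ M : ℕ, 1 ≤ M →
      (ell (Nrho x) : ℝ) - ρ * Real.log (Nrho x) ≤ (ell M : ℝ) - ρ * Real.log M) ∧
    ∃ n : ℕ, Nrho x = landau n := by
  subst hρx
  have hex : Real.exp 1 ≤ x := by linarith [Real.exp_one_lt_d9]
  have hρ_pos : 0 < x / Real.log x := div_pos (by linarith) (Real.log_pos (by linarith))
  have hsuperior (M : ℕ) (hM : M ≠ 0) := ellSubLog_Nrho_le hex hρ hM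
  refine ⟨fun M hM => hsuperior M (by omega), ell (Nrho x), ?_⟩
  refine (landau_ell_eq (Nrho_ne_zero x) fun M hell => ?_).symm
  rcases eq_or_ne M 0 with rfl | hM
  · exact Nat.zero_le _
  · exact le_of_ell_le_of_ellSubLog_le hρ_pos hM (Nrho_ne_zero x) hell (hsuperior M hM)
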